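/- Let {P,T,E,N} be an AIP_S-admissible data set and let Σ be the characteristic function constructed from it via the Redheffer construction. If T satisfies the condition (⋂_{k≥1} Ran (T*)^k) ∩ Ker T* = {0}, then the multiplication operator M_{Σ12} : Hol_{Δ̃*}(D) → Hol_Y(D) is injective. -/
import Mathlib


open ContinuousLinearMap Metric
open scoped InnerProductSpace ComplexOrder

noncomputable section

/-- The de Branges–Rovnyak kernel `K_S(z,ζ) = (I − S(z)S(ζ)*)/(1 − z ζ̄)`. -/
def dbrKernel {U Y : Type*}
    [NormedAddCommGroup U] [InnerProductSpace ℂ U] [CompleteSpace U]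
    [NormedAddCommGroup Y] [InnerProductSpace ℂ Y] [CompleteSpace Y]
    (S : ℂ → (U →L[ℂ] Y)) (z ζ : ℂ) : Y →L[ℂ] Y :=
  (1 - z * (starRingEnd ℂ) ζ)⁻¹ • (1 - (S z) ∘L (adjoint (S ζ)))

/-- The operator-valued Schur class on the unit disk. -/
def IsSchur {U Y : Type*}
    [NormedAddCommGroup U] [NormedSpace ℂ U]
    [NormedAddCommGroup Y] [NormedSpace ℂ Y]
    (S : ℂ → (U →L[ℂ] Y)) : Prop :=
  AnalyticOnNhd ℂ S (ball (0:ℂ) 1) ∧ ∀ z ∈ ball (0:ℂ) 1, ‖S z‖ ≤ 1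

/-- `H` (with realization map `J` and kernel elements `k`) is the reproducing kernel
Hilbert space of the de Branges–Rovnyak kernel `K_S`. -/
structure IsDBRSpace {U Y : Type*}
    [NormedAddCommGroup U] [InnerProductSpace ℂ U] [CompleteSpace U]
    [NormedAddCommGroup Y] [InnerProductSpace ℂ Y] [CompleteSpace Y]
    (S : ℂ → (U →L[ℂ] Y)) (H : Type*) [NormedAddCommGroup H]
    [InnerProductSpace ℂ H] [CompleteSpace H]
    (J : H →ₗ[ℂ] (ℂ → Y)) (k : ℂ → Y → H) : Prop where
  ext : ∀ f g : H, (∀ z ∈ ball (0:ℂ) 1, J f z = J g z) → f = g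
  kernel_eq : ∀ ζ ∈ ball (0:ℂ) 1, ∀ y : Y, ∀ z ∈ ball (0:ℂ) 1,
    J (k ζ y) z = dbrKernel S z ζ y
  reproducing : ∀ ζ ∈ ball (0:ℂ) 1, ∀ (y : Y) (f : H),
    ⟪k ζ y, f⟫_ℂ = ⟪y, J f ζ⟫_ℂ

/-- The rank-one operator `x x* : y ↦ ⟨y, x⟩ x`. -/
def rankOne {X : Type*} [NormedAddCommGroup X] [InnerProductSpace ℂ X]
    (x : X) : X →L[ℂ] X :=
  (innerSL ℂ x).smulRight x

/-- A transfer-function block `z ↦ D + z C (I − zA)^{-1} B`. -/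
def tblock {X0 V W : Type*}
    [NormedAddCommGroup X0] [NormedSpace ℂ X0] [CompleteSpace X0]
    [NormedAddCommGroup V] [NormedSpace ℂ V]
    [NormedAddCommGroup W] [NormedSpace ℂ W]
    (A : X0 →L[ℂ] X0) (B : V →L[ℂ] X0) (C : X0 →L[ℂ] W) (D : V →L[ℂ] W)
    (z : ℂ) : V →L[ℂ] W :=
  D + z • (C ∘L (Ring.inverse (1 - z • A)) ∘L B)

/-- The Redheffer linear-fractional transform
`R_Σ[ℰ] = Σ11 + Σ12 (I − ℰ Σ22)^{-1} ℰ Σ21` associated with the colligation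
`[[A,B1,B2],[C1,D11,D12],[C2,D21,0]]`. -/
def redheffer {U Y X0 Dt Ds : Type*}
    [NormedAddCommGroup U] [NormedSpace ℂ U]
    [NormedAddCommGroup Y] [NormedSpace ℂ Y]
    [NormedAddCommGroup X0] [NormedSpace ℂ X0] [CompleteSpace X0]
    [NormedAddCommGroup Dt] [NormedSpace ℂ Dt] [CompleteSpace Dt]
    [NormedAddCommGroup Ds] [NormedSpace ℂ Ds] [CompleteSpace Ds]
    (A : X0 →L[ℂ] X0) (B1 : U →L[ℂ] X0) (B2 : Ds →L[ℂ] X0)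
    (C1 : X0 →L[ℂ] Y) (C2 : X0 →L[ℂ] Dt)
    (D11 : U →L[ℂ] Y) (D12 : Ds →L[ℂ] Y) (D21 : U →L[ℂ] Dt)
    (ℰ : ℂ → (Dt →L[ℂ] Ds)) (z : ℂ) : U →L[ℂ] Y :=
  tblock A B1 C1 D11 z +
    (tblock A B2 C1 D12 z) ∘L
      (Ring.inverse (1 - (ℰ z) ∘L (tblock A B2 C2 0 z))) ∘L
        ((ℰ z) ∘L (tblock A B1 C2 D21 z))

/-- The unitary colligation `U = [[A,B1,B2],[C1,D11,D12],[C2,D21,0]]` obtained from the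
`AIP_S`-admissible data set `{P,T,E,N}` via the construction of the Abstract
Interpolation Problem: here `ρ : X → X0` plays the role of `P^{1/2} : X → X0` with
`X0 = closure Ran P^{1/2}` (so `ρ` has dense range and `ρ* ρ = P`), the block operator
is unitary, it implements the isometry `V [P^{1/2}x; Nx] = [P^{1/2}Tx; Ex]`, the third
input column is a unitary identification of `Δ̃*` with the defect space
`Δ* = (X0 ⊕ Y) ⊖ R_V`, and the adjoint of the third output row is a unitary
identification of `Δ̃` with the defect space `Δ = (X0 ⊕ U) ⊖ D_V`. -/
structure IsRedhefferColligation
    {X U Y X0 Dt Ds : Type*}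
    [NormedAddCommGroup X] [InnerProductSpace ℂ X] [CompleteSpace X]
    [NormedAddCommGroup U] [InnerProductSpace ℂ U] [CompleteSpace U]
    [NormedAddCommGroup Y] [InnerProductSpace ℂ Y] [CompleteSpace Y]
    [NormedAddCommGroup X0] [InnerProductSpace ℂ X0] [CompleteSpace X0]
    [NormedAddCommGroup Dt] [InnerProductSpace ℂ Dt] [CompleteSpace Dt]
    [NormedAddCommGroup Ds] [InnerProductSpace ℂ Ds] [CompleteSpace Ds]
    (P T : X →L[ℂ] X) (E : X →L[ℂ] Y) (N : X →L[ℂ] U)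
    (ρ : X →L[ℂ] X0)
    (A : X0 →L[ℂ] X0) (B1 : U →L[ℂ] X0) (B2 : Ds →L[ℂ] X0)
    (C1 : X0 →L[ℂ] Y) (C2 : X0 →L[ℂ] Dt)
    (D11 : U →L[ℂ] Y) (D12 : Ds →L[ℂ] Y) (D21 : U →L[ℂ] Dt) : Prop where
  rho_dense : DenseRange ρ
  rho_sq : adjoint ρ ∘L ρ = P
  isometric : ∀ (x0 : X0) (u : U) (d : Ds),
    ‖A x0 + B1 u + B2 d‖ ^ 2 + ‖C1 x0 + D11 u + D12 d‖ ^ 2 + ‖C2 x0 + D21 u‖ ^ 2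
      = ‖x0‖ ^ 2 + ‖u‖ ^ 2 + ‖d‖ ^ 2
  coisometric : ∀ (x0 : X0) (y : Y) (d : Dt),
    ‖adjoint A x0 + adjoint C1 y + adjoint C2 d‖ ^ 2
      + ‖adjoint B1 x0 + adjoint D11 y + adjoint D21 d‖ ^ 2
      + ‖adjoint B2 x0 + adjoint D12 y‖ ^ 2
      = ‖x0‖ ^ 2 + ‖y‖ ^ 2 + ‖d‖ ^ 2
  collig1 : ∀ x : X, A (ρ x) + B1 (N x) = ρ (T x)
  collig2 : ∀ x : X, C1 (ρ x) + D11 (N x) = E x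
  collig3 : ∀ x : X, C2 (ρ x) + D21 (N x) = 0
  defect_star : ∀ (d : Ds) (x : X), ⟪B2 d, ρ (T x)⟫_ℂ + ⟪D12 d, E x⟫_ℂ = 0
  defect_star_iso : ∀ d : Ds, ‖B2 d‖ ^ 2 + ‖D12 d‖ ^ 2 = ‖d‖ ^ 2
  defect_star_onto : ∀ (x0 : X0) (y : Y),
    (∀ x : X, ⟪x0, ρ (T x)⟫_ℂ + ⟪y, E x⟫_ℂ = 0) → ∃ d : Ds, B2 d = x0 ∧ D12 d = y
  defect : ∀ (d : Dt) (x : X), ⟪adjoint C2 d, ρ x⟫_ℂ + ⟪adjoint D21 d, N x⟫_ℂ = 0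
  defect_iso : ∀ d : Dt, ‖adjoint C2 d‖ ^ 2 + ‖adjoint D21 d‖ ^ 2 = ‖d‖ ^ 2
  defect_onto : ∀ (x0 : X0) (u : U),
    (∀ x : X, ⟪x0, ρ x⟫_ℂ + ⟪u, N x⟫_ℂ = 0) →
      ∃ d : Dt, adjoint C2 d = x0 ∧ adjoint D21 d = u


open scoped Topology in
set_option maxHeartbeats 2000000 in
theorem stmt13_aux
    {X U Y X0 Dt Ds : Type*}
    [NormedAddCommGroup X] [InnerProductSpace ℂ X] [CompleteSpace X]
    [NormedAddCommGroup U] [InnerProductSpace ℂ U] [CompleteSpace U]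
    [NormedAddCommGroup Y] [InnerProductSpace ℂ Y] [CompleteSpace Y]
    [NormedAddCommGroup X0] [InnerProductSpace ℂ X0] [CompleteSpace X0]
    [NormedAddCommGroup Dt] [InnerProductSpace ℂ Dt] [CompleteSpace Dt]
    [NormedAddCommGroup Ds] [InnerProductSpace ℂ Ds] [CompleteSpace Ds]
    -- the `AIP_S`-admissible data set
    (P T : X →L[ℂ] X) (E : X →L[ℂ] Y) (N : X →L[ℂ] U)
    (hPpos : P.IsPositive)
    (hStein : P - adjoint T ∘L P ∘L T = adjoint E ∘L E - adjoint N ∘L N)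
    (OET : X → ℂ → Y) (ONT : X → ℂ → U)
    (hOET : ∀ x0 : X, ∀ z ∈ ball (0:ℂ) 1,
      HasSum (fun n : ℕ => z ^ n • E ((T ^ n) x0)) (OET x0 z))
    (hONT : ∀ x0 : X, ∀ z ∈ ball (0:ℂ) 1,
      HasSum (fun n : ℕ => z ^ n • N ((T ^ n) x0)) (ONT x0 z))
    -- the unitary colligation constructed from `{P,T,E,N}`
    (ρ : X →L[ℂ] X0)
    (A : X0 →L[ℂ] X0) (B1 : U →L[ℂ] X0) (B2 : Ds →L[ℂ] X0)
    (C1 : X0 →L[ℂ] Y) (C2 : X0 →L[ℂ] Dt)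
    (D11 : U →L[ℂ] Y) (D12 : Ds →L[ℂ] Y) (D21 : U →L[ℂ] Dt)
    (hcol : IsRedhefferColligation P T E N ρ A B1 B2 C1 C2 D11 D12 D21)
    -- the condition `(⋂_{k ≥ 1} Ran (T*)^k) ∩ Ker T* = {0}`
    (hT : ∀ x : X,
      (∀ k : ℕ, 1 ≤ k → x ∈ Set.range ((adjoint T) ^ k)) →
      adjoint T x = 0 → x = 0) :
    -- `M_{Σ12} : Hol_{Δ̃*}(D) → Hol_Y(D)` is injective
    ∀ h : ℂ → Ds, AnalyticOnNhd ℂ h (ball (0:ℂ) 1) →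
      (∀ z ∈ ball (0:ℂ) 1, tblock A B2 C1 D12 z (h z) = 0) →
      ∀ z ∈ ball (0:ℂ) 1, h z = 0 := by
  clear hPpos hStein hOET hONT
  intro f hf hfker
  have hmem0 : (0:ℂ) ∈ ball (0:ℂ) 1 := mem_ball_self one_pos
  -- `A` is a contraction
  have hA_le : ∀ x0 : X0, ‖A x0‖ ≤ ‖x0‖ := by
    intro x0
    have H := hcol.isometric x0 0 0
    simp only [map_zero, add_zero, norm_zero] at H
    nlinarith [norm_nonneg (A x0), norm_nonneg (C1 x0), norm_nonneg (C2 x0), norm_nonneg x0,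
      sq_nonneg ‖C1 x0‖, sq_nonneg ‖C2 x0‖]
  have hAnorm : ‖A‖ ≤ 1 :=
    ContinuousLinearMap.opNorm_le_bound A zero_le_one (fun x => by simpa using hA_le x)
  have hsmul_lt : ∀ z ∈ ball (0:ℂ) 1, ‖z • A‖ < 1 := by
    intro z hz
    have h1 : ‖z • A‖ ≤ ‖z‖ * 1 := by
      rw [norm_smul]; exact mul_le_mul_of_nonneg_left hAnorm (norm_nonneg z)
    have h2 : ‖z‖ < 1 := by simpa using mem_ball_zero_iff.mp hz
    calc ‖z • A‖ ≤ ‖z‖ := by simpa using h1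
      _ < 1 := h2
  -- the state function `g` and `φ = ρ* g`
  obtain ⟨g, hgz⟩ : ∃ g : ℂ → X0, ∀ z : ℂ, g z = Ring.inverse (1 - z • A) (B2 (f z)) :=
    ⟨_, fun _ => rfl⟩
  have hinv_mul : ∀ z ∈ ball (0:ℂ) 1,
      ((1 : X0 →L[ℂ] X0) - z • A) * Ring.inverse (1 - z • A) = 1 := by
    intro z hz
    rw [show ((1 : X0 →L[ℂ] X0) - z • A) = ((Units.oneSub (z • A) (hsmul_lt z hz) : _) :
      X0 →L[ℂ] X0) from rfl, Ring.inverse_unit, Units.mul_inv]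
  have hg : ∀ z ∈ ball (0:ℂ) 1, g z = B2 (f z) + z • A (g z) := by
    intro z hz
    have H := congrArg (fun M : X0 →L[ℂ] X0 => M (B2 (f z))) (hinv_mul z hz)
    simp only [ContinuousLinearMap.mul_apply, ContinuousLinearMap.sub_apply,
      ContinuousLinearMap.one_apply, ContinuousLinearMap.smul_apply, ← hgz] at H
    exact sub_eq_iff_eq_add.mp H
  have hker' : ∀ z ∈ ball (0:ℂ) 1, D12 (f z) + z • C1 (g z) = 0 := by
    intro z hz
    have H := hfker z hz
    simp only [tblock, ContinuousLinearMap.add_apply, ContinuousLinearMap.smul_apply,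
      ContinuousLinearMap.comp_apply, ← hgz] at H
    exact H
  -- polarization identity: `⟪A x0, ρ T x⟫ + ⟪C1 x0, E x⟫ = ⟪x0, ρ x⟫`
  have hstar : ∀ (x0 : X0) (x : X),
      ⟪A x0, ρ (T x)⟫_ℂ + ⟪C1 x0, E x⟫_ℂ = ⟪x0, ρ x⟫_ℂ := by
    intro x0 x
    have e1 := hcol.collig1 x
    have e2 := hcol.collig2 x
    have e3 := hcol.collig3 x
    have key : ∀ s : ℂ, ‖A x0 + s • ρ (T x)‖ ^ 2 + ‖C1 x0 + s • E x‖ ^ 2 + ‖C2 x0‖ ^ 2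
        = ‖x0 + s • ρ x‖ ^ 2 + ‖s • N x‖ ^ 2 := by
      intro s
      have H := hcol.isometric (x0 + s • ρ x) (s • N x) 0
      have k1 : A (x0 + s • ρ x) + B1 (s • N x) + B2 0 = A x0 + s • ρ (T x) := by
        rw [← e1]; simp only [map_add, map_smul, map_zero, add_zero, smul_add]; abel
      have k2 : C1 (x0 + s • ρ x) + D11 (s • N x) + D12 0 = C1 x0 + s • E x := by
        rw [← e2]; simp only [map_add, map_smul, map_zero, add_zero, smul_add]; abel
      have k3 : C2 (x0 + s • ρ x) + D21 (s • N x) = C2 x0 := by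
        have hh : C2 (x0 + s • ρ x) + D21 (s • N x)
            = C2 x0 + s • (C2 (ρ x) + D21 (N x)) := by
          simp only [map_add, map_smul, smul_add]; abel
        rw [hh, e3, smul_zero, add_zero]
      rw [k1, k2, k3] at H
      simpa using H
    have E1 := key 1
    have E2 := key (-1)
    have E3 := key (-Complex.I)
    have E4 := key Complex.I
    simp only [one_smul, neg_smul, ← sub_eq_add_neg, norm_neg, norm_smul, Complex.norm_I,
      norm_one, one_mul] at E1 E2 E3 E4
    rw [inner_eq_sum_norm_sq_div_four (𝕜 := ℂ) (A x0) (ρ (T x)),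
      inner_eq_sum_norm_sq_div_four (𝕜 := ℂ) (C1 x0) (E x),
      inner_eq_sum_norm_sq_div_four (𝕜 := ℂ) x0 (ρ x)]
    simp only [RCLike.I_to_complex, RCLike.ofReal, Algebra.cast, Complex.coe_algebraMap]
    have E1c := congrArg (fun t : ℝ => (t : ℂ)) E1
    have E2c := congrArg (fun t : ℝ => (t : ℂ)) E2
    have E3c := congrArg (fun t : ℝ => (t : ℂ)) E3
    have E4c := congrArg (fun t : ℝ => (t : ℂ)) E4
    push_cast at E1c E2c E3c E4c
    linear_combination (E1c - E2c + (E3c - E4c) * Complex.I) / 4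
  -- adjoint identities
  have F3 : ∀ d : Ds, adjoint T (adjoint ρ (B2 d)) = -(adjoint E (D12 d)) := by
    intro d
    have hx : ∀ x : X, ⟪adjoint T (adjoint ρ (B2 d)) + adjoint E (D12 d), x⟫_ℂ
        = ⟪(0 : X), x⟫_ℂ := by
      intro x
      rw [inner_zero_left, inner_add_left, adjoint_inner_left, adjoint_inner_left,
        adjoint_inner_left]
      exact hcol.defect_star d x
    have h0 := ext_inner_right ℂ hx
    exact eq_neg_of_add_eq_zero_left h0
  have F4 : ∀ x0 : X0, adjoint T (adjoint ρ (A x0)) = adjoint ρ x0 - adjoint E (C1 x0) := by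
    intro x0
    have hx : ∀ x : X, ⟪adjoint T (adjoint ρ (A x0)) + adjoint E (C1 x0), x⟫_ℂ
        = ⟪adjoint ρ x0, x⟫_ℂ := by
      intro x
      rw [inner_add_left, adjoint_inner_left, adjoint_inner_left, adjoint_inner_left,
        adjoint_inner_left]
      exact hstar x0 x
    have h0 := ext_inner_right ℂ hx
    exact eq_sub_of_add_eq h0
  obtain ⟨φ, hφz⟩ : ∃ φ : ℂ → X, ∀ z : ℂ, φ z = adjoint ρ (g z) := ⟨_, fun _ => rfl⟩
  -- the eigenvector relation `T* φ(z) = z • φ(z)`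
  have heig : ∀ z ∈ ball (0:ℂ) 1, adjoint T (φ z) = z • φ z := by
    intro z hz
    have h1 : φ z = adjoint ρ (B2 (f z)) + z • adjoint ρ (A (g z)) := by
      rw [hφz z]
      conv_lhs => rw [hg z hz]
      rw [map_add, map_smul]
    calc adjoint T (φ z)
        = adjoint T (adjoint ρ (B2 (f z))) + z • adjoint T (adjoint ρ (A (g z))) := by
          rw [h1, map_add, map_smul]
      _ = -(adjoint E (D12 (f z))) + z • (adjoint ρ (g z) - adjoint E (C1 (g z))) := by
          rw [F3, F4]
      _ = z • φ z - adjoint E (D12 (f z) + z • C1 (g z)) := by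
          rw [hφz z, map_add, map_smul, smul_sub]; abel
      _ = z • φ z := by rw [hker' z hz, map_zero, sub_zero]
  -- analyticity
  have hInv : ∀ z ∈ ball (0:ℂ) 1,
      AnalyticAt ℂ (fun w : ℂ => Ring.inverse ((1 : X0 →L[ℂ] X0) - w • A)) z := by
    intro z hz
    have h1 : AnalyticAt ℂ (fun w : ℂ => (1 : X0 →L[ℂ] X0) - w • A) z :=
      analyticAt_const.sub (analyticAt_id.smul analyticAt_const)
    have h2 : AnalyticAt ℂ (Ring.inverse : (X0 →L[ℂ] X0) → (X0 →L[ℂ] X0))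
        ((1 : X0 →L[ℂ] X0) - z • A) := by
      have h3 := analyticAt_inverse (𝕜 := ℂ) (Units.oneSub (z • A) (hsmul_lt z hz))
      exact h3
    have h4 := h2.comp (f := fun w : ℂ => (1 : X0 →L[ℂ] X0) - w • A) (x := z) h1
    simpa [Function.comp_def] using h4
  have hgan : AnalyticOnNhd ℂ g (ball (0:ℂ) 1) := by
    rw [funext hgz]
    intro z hz
    have hb := (ContinuousLinearMap.id ℂ (X0 →L[ℂ] X0)).analyticAt_bilinear
      (Ring.inverse ((1 : X0 →L[ℂ] X0) - z • A), B2 (f z))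
    have h2 : AnalyticAt ℂ (fun w : ℂ => B2 (f w)) z := (B2.analyticAt (f z)).comp (hf z hz)
    exact hb.comp₂ (hInv z hz) h2
  have hφan : AnalyticOnNhd ℂ φ (ball (0:ℂ) 1) := by
    rw [funext hφz]
    exact fun z hz => ((adjoint ρ).analyticAt (g z)).comp (hgan z hz)
  have hDan : ∀ n : ℕ, AnalyticOnNhd ℂ (iteratedDeriv n φ) (ball (0:ℂ) 1) := by
    intro n
    rw [iteratedDeriv_eq_iterate]
    exact hφan.iterated_deriv n
  -- differentiating the eigenvector relation
  have step : ∀ (F G : ℂ → X) (c : ℂ), AnalyticOnNhd ℂ F (ball (0:ℂ) 1) →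
      AnalyticOnNhd ℂ G (ball (0:ℂ) 1) →
      (∀ z ∈ ball (0:ℂ) 1, adjoint T (F z) = z • F z + c • G z) →
      ∀ z ∈ ball (0:ℂ) 1,
        adjoint T (deriv F z) = z • deriv F z + (F z + c • deriv G z) := by
    intro F G c hFan hGan hrel z hz
    have hFd : HasDerivAt F (deriv F z) z := (hFan z hz).differentiableAt.hasDerivAt
    have hGd : HasDerivAt G (deriv G z) z := (hGan z hz).differentiableAt.hasDerivAt
    have h2 : HasDerivAt (fun w => w • F w + c • G w)
        ((z • deriv F z + (1:ℂ) • F z) + c • deriv G z) z :=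
      ((hasDerivAt_id z).smul hFd).add (hGd.const_smul c)
    have heq : (fun w => adjoint T (F w)) =ᶠ[𝓝 z] fun w => w • F w + c • G w := by
      filter_upwards [isOpen_ball.mem_nhds hz] with w hw
      exact hrel w hw
    have h3 : HasDerivAt (fun w => adjoint T (F w))
        ((z • deriv F z + (1:ℂ) • F z) + c • deriv G z) z :=
      h2.congr_of_eventuallyEq heq
    have h4 : HasDerivAt (fun w => adjoint T (F w)) (adjoint T (deriv F z)) z :=
      (adjoint T).hasFDerivAt.comp_hasDerivAt z hFd
    rw [h4.unique h3, one_smul, add_assoc]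
  have hchain : ∀ n : ℕ, ∀ z ∈ ball (0:ℂ) 1,
      adjoint T (iteratedDeriv (n+1) φ z)
        = z • iteratedDeriv (n+1) φ z + ((n:ℂ)+1) • iteratedDeriv n φ z := by
    intro n
    induction n with
    | zero =>
      intro z hz
      have h0 : ∀ w ∈ ball (0:ℂ) 1, adjoint T (φ w) = w • φ w + (0:ℂ) • φ w := by
        intro w hw; rw [heig w hw, zero_smul, add_zero]
      have := step φ φ 0 hφan hφan h0 z hz
      simpa [iteratedDeriv_one, iteratedDeriv_zero] using this
    | succ n ih =>
      intro z hz
      have := step (iteratedDeriv (n+1) φ) (iteratedDeriv n φ) ((n:ℂ)+1)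
        (hDan (n+1)) (hDan n) ih z hz
      rw [← iteratedDeriv_succ, ← iteratedDeriv_succ] at this
      rw [this]
      push_cast
      module
  -- Taylor coefficients at 0
  have hc0 : adjoint T (iteratedDeriv 0 φ 0) = 0 := by
    rw [iteratedDeriv_zero, heig 0 hmem0, zero_smul]
  have hcsucc : ∀ n : ℕ,
      adjoint T (iteratedDeriv (n+1) φ 0) = ((n:ℂ)+1) • iteratedDeriv n φ 0 := by
    intro n; rw [hchain n 0 hmem0, zero_smul, zero_add]
  have hran : ∀ k n : ℕ, ∃ w : X, ((adjoint T) ^ k) w = iteratedDeriv n φ 0 := by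
    intro k
    induction k with
    | zero => exact fun n => ⟨iteratedDeriv n φ 0, by simp⟩
    | succ k ih =>
      intro n
      obtain ⟨w, hw⟩ := ih (n+1)
      refine ⟨((n:ℂ)+1)⁻¹ • w, ?_⟩
      have hne : ((n:ℂ)+1) ≠ 0 := Nat.cast_add_one_ne_zero n
      rw [pow_succ', ContinuousLinearMap.mul_apply, map_smul, hw, map_smul, hcsucc n,
        smul_smul, inv_mul_cancel₀ hne, one_smul]
  have hczero : ∀ n : ℕ, iteratedDeriv n φ 0 = 0 := by
    intro n
    induction n with
    | zero =>
      exact hT _ (fun k _ => hran k 0) hc0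
    | succ n ih =>
      refine hT _ (fun k _ => hran k (n+1)) ?_
      rw [hcsucc n, ih, smul_zero]
  -- `φ` vanishes near `0`
  obtain ⟨p, r, hpr⟩ := hφan 0 hmem0
  have hcoeff : ∀ (n : ℕ) (y : ℂ), (p n fun _ => y) = 0 := by
    intro n y
    have h1 := hpr.factorial_smul (y := (1:ℂ)) n
    rw [← iteratedDeriv_eq_iteratedFDeriv, hczero n] at h1
    have h3 : (p n fun _ => (1:ℂ)) = 0 := by
      rw [← Nat.cast_smul_eq_nsmul ℂ] at h1
      exact (smul_eq_zero.mp h1).resolve_left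
        (by exact_mod_cast Nat.factorial_ne_zero n)
    have h4 : p.coeff n = 0 := h3
    rw [FormalMultilinearSeries.apply_eq_pow_smul_coeff, h4, smul_zero]
  have hev : φ =ᶠ[𝓝 (0:ℂ)] 0 := by
    filter_upwards [EMetric.ball_mem_nhds (0:ℂ) hpr.r_pos] with y hy
    have hs := hpr.hasSum (by simpa using hy)
    have h0 : HasSum (fun _ : ℕ => (0 : X)) (φ (0 + y)) := by
      simpa [hcoeff] using hs
    have := h0.unique hasSum_zero
    simpa using this
  -- conclude `f = 0` near `0`, then on the whole ball
  have hzero_on : ∀ w ∈ ball (0:ℂ) 1, φ w = 0 → f w = 0 := by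
    intro w hw hφw
    have hgw : g w = 0 := by
      have hinner : ∀ x : X, ⟪g w, ρ x⟫_ℂ = 0 := by
        intro x
        have h5 : ⟪adjoint ρ (g w), x⟫_ℂ = 0 := by
          rw [← hφz w, hφw, inner_zero_left]
        rwa [adjoint_inner_left] at h5
      have hfun : (fun v : X0 => ⟪g w, v⟫_ℂ) = fun _ => 0 := by
        apply Continuous.ext_on hcol.rho_dense
        · exact continuous_const.inner continuous_id
        · exact continuous_const
        · rintro v ⟨x, rfl⟩; exact hinner x
      exact inner_self_eq_zero.mp (congrFun hfun (g w))
    have hB2 : B2 (f w) = 0 := by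
      have h5 := hg w hw
      rw [hgw, map_zero, smul_zero, add_zero] at h5
      exact h5.symm
    have hD12 : D12 (f w) = 0 := by
      have h6 := hker' w hw
      rw [hgw, map_zero, smul_zero, add_zero] at h6
      exact h6
    have h7 := hcol.defect_star_iso (f w)
    rw [hB2, hD12, norm_zero] at h7
    have h8 : ‖f w‖ ^ 2 = 0 := by simpa using h7.symm
    have h9 : ‖f w‖ = 0 := by
      nlinarith [norm_nonneg (f w)]
    exact norm_eq_zero.mp h9
  have hev2 : f =ᶠ[𝓝 (0:ℂ)] 0 := by
    filter_upwards [hev, isOpen_ball.mem_nhds hmem0] with w hw1 hw2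
    exact hzero_on w hw2 (by simpa using hw1)
  have hfinal := hf.eqOn_zero_of_preconnected_of_eventuallyEq_zero
    ((convex_ball (0:ℂ) 1).isPreconnected) hmem0 hev2
  intro z hz
  exact hfinal hz


/-- Let `{P,T,E,N}` be an `AIP_S`-admissible data set and let `Σ` be
the characteristic function constructed from it via the Redheffer construction.  If
`(⋂_{k ≥ 1} Ran (T*)^k) ∩ Ker T* = {0}`, then the multiplication operator
`M_{Σ12} : Hol_{Δ̃*}(D) → Hol_Y(D)` is injective. -/
theorem stmt13
    {X U Y X0 Dt Ds : Type*}
    [NormedAddCommGroup X] [InnerProductSpace ℂ X] [CompleteSpace X]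
    [NormedAddCommGroup U] [InnerProductSpace ℂ U] [CompleteSpace U]
    [NormedAddCommGroup Y] [InnerProductSpace ℂ Y] [CompleteSpace Y]
    [NormedAddCommGroup X0] [InnerProductSpace ℂ X0] [CompleteSpace X0]
    [NormedAddCommGroup Dt] [InnerProductSpace ℂ Dt] [CompleteSpace Dt]
    [NormedAddCommGroup Ds] [InnerProductSpace ℂ Ds] [CompleteSpace Ds]
    -- the `AIP_S`-admissible data set
    (P T : X →L[ℂ] X) (E : X →L[ℂ] Y) (N : X →L[ℂ] U)
    (hPpos : P.IsPositive)
    (hStein : P - adjoint T ∘L P ∘L T = adjoint E ∘L E - adjoint N ∘L N)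
    (OET : X → ℂ → Y) (ONT : X → ℂ → U)
    (hOET : ∀ x0 : X, ∀ z ∈ ball (0:ℂ) 1,
      HasSum (fun n : ℕ => z ^ n • E ((T ^ n) x0)) (OET x0 z))
    (hONT : ∀ x0 : X, ∀ z ∈ ball (0:ℂ) 1,
      HasSum (fun n : ℕ => z ^ n • N ((T ^ n) x0)) (ONT x0 z))
    -- the unitary colligation constructed from `{P,T,E,N}`
    (ρ : X →L[ℂ] X0)
    (A : X0 →L[ℂ] X0) (B1 : U →L[ℂ] X0) (B2 : Ds →L[ℂ] X0)
    (C1 : X0 →L[ℂ] Y) (C2 : X0 →L[ℂ] Dt)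
    (D11 : U →L[ℂ] Y) (D12 : Ds →L[ℂ] Y) (D21 : U →L[ℂ] Dt)
    (hcol : IsRedhefferColligation P T E N ρ A B1 B2 C1 C2 D11 D12 D21)
    -- the condition `(⋂_{k ≥ 1} Ran (T*)^k) ∩ Ker T* = {0}`
    (hT : ∀ x : X,
      (∀ k : ℕ, 1 ≤ k → x ∈ Set.range ((adjoint T) ^ k)) →
      adjoint T x = 0 → x = 0) :
    -- `M_{Σ12} : Hol_{Δ̃*}(D) → Hol_Y(D)` is injective
    ∀ h : ℂ → Ds, AnalyticOnNhd ℂ h (ball (0:ℂ) 1) →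
      (∀ z ∈ ball (0:ℂ) 1, tblock A B2 C1 D12 z (h z) = 0) →
      ∀ z ∈ ball (0:ℂ) 1, h z = 0 :=
  stmt13_aux P T E N hPpos hStein OET ONT hOET hONT ρ A B1 B2 C1 C2 D11 D12 D21 hcol hT

end
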